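/- Harmonic splitting in each degree (equation (4.3)). For every ℓ ∈ ℕ, one has P_ℓ = H_ℓ ⊕ Σ_{1≤i≤j≤k} r²_ij · P_{ℓ−2}; that is, every complex polynomial homogeneous of total degree ℓ is the sum of a harmonic polynomial of degree ℓ and an element of Σ_{1≤i≤j≤k} r²_ij · P_{ℓ−2}, and H_ℓ ∩ (Σ_{1≤i≤j≤k} r²_ij · P_{ℓ−2}) = {0}. (Here P_{ℓ−2} = {0} if ℓ < 2.) -/

import Mathlib

open scoped TensorProduct

noncomputable section

/-- Scalar polynomials in the m·k variables x_{li}. -/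
abbrev Pscal (m k : ℕ) := MvPolynomial (Fin m × Fin k) ℂ

/-- The quadratic form Q(z) = -(z₁² + ⋯ + z_m²) on ℂ^m. -/
def Qf (m : ℕ) : QuadraticForm ℂ (Fin m → ℂ) :=
  QuadraticMap.weightedSumSquares ℂ (fun _ : Fin m => (-1 : ℂ))

/-- The complex Clifford algebra C_m. -/
abbrev Cl (m : ℕ) := CliffordAlgebra (Qf m)

/-- The generator e_l of the Clifford algebra. -/
def e (m : ℕ) (l : Fin m) : Cl m := CliffordAlgebra.ι (Qf m) (Pi.single l 1)

/-- C_m-valued polynomials. -/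
abbrev PC (m k : ℕ) := Pscal m k ⊗[ℂ] Cl m

/-- Partial derivative ∂_{x_{li}} acting on C_m-valued polynomials. -/
def pd (m k : ℕ) (l : Fin m) (i : Fin k) : PC m k →ₗ[ℂ] PC m k :=
  LinearMap.rTensor (Cl m) (MvPolynomial.pderiv (l, i)).toLinearMap

/-- The j-th Dirac operator ∂_{x_j} = Σ_l e_l ∂_{x_{lj}}. -/
def dirac (m k : ℕ) (j : Fin k) : PC m k →ₗ[ℂ] PC m k :=
  ∑ l : Fin m,
    (LinearMap.mulLeft ℂ ((1 : Pscal m k) ⊗ₜ[ℂ] e m l)) ∘ₗ pd m k l j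

/-- The space M of monogenic polynomials. -/
def Mono (m k : ℕ) : Submodule ℂ (PC m k) :=
  ⨅ j : Fin k, LinearMap.ker (dirac m k j)

/-- The j-th vector variable x_j = Σ_l e_l x_{lj}. -/
def xv (m k : ℕ) (j : Fin k) : PC m k :=
  ∑ l : Fin m, (MvPolynomial.X (l, j) : Pscal m k) ⊗ₜ[ℂ] e m l

/-- For J = {j₁ < ⋯ < j_r} ⊆ {1,…,k}, the product x_J = x_{j₁} ⋯ x_{j_r}. -/
def xJ (m k : ℕ) (J : Finset (Fin k)) : PC m k :=
  ((J.sort (· ≤ ·)).map (xv m k)).prod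

/-- The invariant r²_ij = Σ_l x_{li} x_{lj}. -/
def rP (m k : ℕ) (i j : Fin k) : Pscal m k :=
  ∑ l : Fin m, MvPolynomial.X (l, i) * MvPolynomial.X (l, j)

/-- Products ∏_{1≤i≤j≤k} r_ij^{2 n_ij} indexed by finitely supported families. -/
def rprod (m k : ℕ) (n : {p : Fin k × Fin k // p.1 ≤ p.2} →₀ ℕ) : Pscal m k :=
  n.prod fun p e => rP m k p.1.1 p.1.2 ^ (2 * e)

/-- The element (∏ r_ij^{2n_ij}) · x_J of P⊗C_m. -/
def basisElem (m k : ℕ) (J : Finset (Fin k))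
    (n : {p : Fin k × Fin k // p.1 ≤ p.2} →₀ ℕ) : PC m k :=
  (rprod m k n ⊗ₜ[ℂ] (1 : Cl m)) * xJ m k J

/-- The operator Δ_ij = Σ_l ∂_{x_{li}} ∂_{x_{lj}} on scalar polynomials. -/
def lap (m k : ℕ) (i j : Fin k) : Pscal m k →ₗ[ℂ] Pscal m k :=
  ∑ l : Fin m,
    (MvPolynomial.pderiv (l, i)).toLinearMap ∘ₗ (MvPolynomial.pderiv (l, j)).toLinearMap

/-- The space H of harmonic scalar polynomials. -/
def Harm (m k : ℕ) : Submodule ℂ (Pscal m k) :=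
  ⨅ p : {p : Fin k × Fin k // p.1 ≤ p.2}, LinearMap.ker (lap m k p.1.1 p.1.2)

/-- The operator Δ_ij acting on C_m-valued polynomials. -/
def lapC (m k : ℕ) (i j : Fin k) : PC m k →ₗ[ℂ] PC m k :=
  ∑ l : Fin m, pd m k l i ∘ₗ pd m k l j

/-- The space of C_m-valued harmonic polynomials. -/
def HarmC (m k : ℕ) : Submodule ℂ (PC m k) :=
  ⨅ p : {p : Fin k × Fin k // p.1 ≤ p.2}, LinearMap.ker (lapC m k p.1.1 p.1.2)

/-- The operator E_ij = Σ_l x_{li} ∂_{x_{lj}} acting on C_m-valued polynomials. -/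
def Eop (m k : ℕ) (i j : Fin k) : PC m k →ₗ[ℂ] PC m k :=
  ∑ l : Fin m,
    (LinearMap.mulLeft ℂ ((MvPolynomial.X (l, i) : Pscal m k) ⊗ₜ[ℂ] (1 : Cl m))) ∘ₗ pd m k l j

/-- The space M^S of simplicial monogenic polynomials. -/
def SimpMono (m k : ℕ) : Submodule ℂ (PC m k) :=
  Mono m k ⊓ ⨅ p : {p : Fin k × Fin k // p.1 < p.2}, LinearMap.ker (Eop m k p.1.1 p.1.2)

/-- Scalar polynomials homogeneous of total degree ℓ. -/
abbrev Pdeg (m k : ℕ) (ℓ : ℕ) : Submodule ℂ (Pscal m k) :=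
  MvPolynomial.homogeneousSubmodule (Fin m × Fin k) ℂ ℓ

/-- Scalar homogeneous polynomials, zero in negative degrees. -/
def PdegZ (m k : ℕ) (n : ℤ) : Submodule ℂ (Pscal m k) :=
  if 0 ≤ n then Pdeg m k n.toNat else ⊥

/-- C_m-valued polynomials homogeneous of total degree ℓ. -/
def PCdeg (m k : ℕ) (ℓ : ℕ) : Submodule ℂ (PC m k) :=
  LinearMap.range (LinearMap.rTensor (Cl m) (Pdeg m k ℓ).subtype)

/-- C_m-valued homogeneous polynomials, zero in negative degrees. -/
def PCdegZ (m k : ℕ) (n : ℤ) : Submodule ℂ (PC m k) :=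
  if 0 ≤ n then PCdeg m k n.toNat else ⊥

/-- Monogenic polynomials homogeneous of given degree, zero in negative degrees. -/
def MdegZ (m k : ℕ) (n : ℤ) : Submodule ℂ (PC m k) :=
  if 0 ≤ n then Mono m k ⊓ PCdeg m k n.toNat else ⊥

/-- C_m-valued polynomials multihomogeneous of degree a_i in the i-th column x_{1i},…,x_{mi}. -/
def PCmdeg (m k : ℕ) (a : Fin k → ℕ) : Submodule ℂ (PC m k) :=
  LinearMap.range (LinearMap.rTensor (Cl m)
    (MvPolynomial.weightedHomogeneousSubmodule ℂ
      (fun p : Fin m × Fin k => Pi.single p.2 1) a).subtype)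

/-- The action of SO(m) on scalar polynomials by x_{li} ↦ Σ_s g_{sl} x_{si}. -/
def soAct (m k : ℕ) (g : Matrix (Fin m) (Fin m) ℝ) : Pscal m k →ₐ[ℂ] Pscal m k :=
  MvPolynomial.aeval fun p : Fin m × Fin k =>
    ∑ s : Fin m, MvPolynomial.C (g s p.1 : ℂ) * MvPolynomial.X (s, p.2)

/-- The Fischer inner product on scalar polynomials. -/
def fischer (m k : ℕ) (f g : Pscal m k) : ℂ :=
  ∑ α ∈ f.support,
    (α.prod fun _ e => (Nat.factorial e : ℂ)) * (starRingEnd ℂ) (f.coeff α) * g.coeff α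

end

/-!
The Fischer pairing `⟪f, g⟫ = ∑ α! f_α g_α` makes multiplication by `r²_ij` adjoint to `Δ_ij`, so
inside `P_ℓ` the harmonic polynomials are exactly the polynomials orthogonal to
`∑ r²_ij · P_{ℓ-2}`. This subspace is closed under coefficientwise conjugation and
`⟪f, conj f⟫ = ∑ α! |f_α|²`, so the pairing is nondegenerate on it; a dimension count in the
finite-dimensional `P_ℓ` then makes it complementary to its orthogonal.
-/

namespace MvPolynomial

open Nat LinearMap.BilinForm

variable {σ R : Type*} [CommSemiring R]

def multiFactorial (α : σ →₀ ℕ) : ℕ := α.prod fun _ n => n !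

theorem multiFactorial_pos (α : σ →₀ ℕ) : 0 < multiFactorial α :=
  Finset.prod_pos fun _ _ => factorial_pos _

theorem multiFactorial_add_single [DecidableEq σ] (α : σ →₀ ℕ) (v : σ) :
    multiFactorial (α + Finsupp.single v 1) = (α v + 1) * multiFactorial α := by
  have split : ∀ β : σ →₀ ℕ, multiFactorial β = (β v)! * (β.erase v).prod fun _ n => n ! :=
    fun β => (Finsupp.mul_prod_erase' β v _ fun _ => factorial_zero).symm
  rw [split, split α, Finsupp.erase_add, Finsupp.erase_single, add_zero]
  simp [factorial_succ, mul_assoc]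

theorem pderiv_eq_zero_of_isHomogeneous_zero {p : MvPolynomial σ R} (h : p.IsHomogeneous 0)
    (i : σ) : pderiv i p = 0 := by
  rw [← totalDegree_zero_iff_isHomogeneous, totalDegree_eq_zero_iff_eq_C] at h
  rw [h, pderiv_C]

instance [Finite σ] (n : ℕ) : Module.Finite R (homogeneousSubmodule σ R n) :=
  Module.Finite.iff_fg.mpr (homogeneousSubmodule_fg σ R n)

variable (σ R) in
/-- `⟪f, g⟫ = ∑ α! f_α g_α`; over `ℂ` the Fischer inner product `fischer f g` is
`fischerForm (conj f) g`. -/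
noncomputable def fischerForm : LinearMap.BilinForm R (MvPolynomial σ R) :=
  Finsupp.lsum R (fun α => LinearMap.toSpanSingleton R _ ((multiFactorial α : R) • lcoeff R α))
    ∘ₗ (AddMonoidAlgebra.coeffLinearEquiv R).toLinearMap

theorem fischerForm_apply (f g : MvPolynomial σ R) :
    fischerForm σ R f g = ∑ α ∈ f.support, multiFactorial α * coeff α f * coeff α g := by
  simp only [fischerForm, LinearMap.comp_apply, LinearEquiv.coe_coe, Finsupp.lsum_apply,
    Finsupp.sum, LinearMap.sum_apply]
  refine Finset.sum_congr rfl fun α _ => ?_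
  simp only [LinearMap.toSpanSingleton_apply, LinearMap.smul_apply, lcoeff_apply, smul_eq_mul]
  change coeff α f * _ = _
  ring

theorem fischerForm_apply_of_support_subset {f : MvPolynomial σ R} {s : Finset (σ →₀ ℕ)}
    (hs : f.support ⊆ s) (g : MvPolynomial σ R) :
    fischerForm σ R f g = ∑ α ∈ s, multiFactorial α * coeff α f * coeff α g := by
  rw [fischerForm_apply]
  refine Finset.sum_subset hs fun α _ hα => ?_
  rw [notMem_support_iff.mp hα, mul_zero, zero_mul]

theorem isSymm_fischerForm : (fischerForm σ R).IsSymm := by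
  classical
  refine ⟨fun f g => ?_⟩
  rw [fischerForm_apply_of_support_subset Finset.subset_union_left,
    fischerForm_apply_of_support_subset (Finset.subset_union_right (s₁ := f.support))]
  exact Finset.sum_congr rfl fun α _ => by ring

theorem fischerForm_X_mul (v : σ) (p q : MvPolynomial σ R) :
    fischerForm σ R (X v * p) q = fischerForm σ R p (pderiv v q) := by
  classical
  rw [fischerForm_apply, support_X_mul, Finset.sum_map, fischerForm_apply]
  refine Finset.sum_congr rfl fun α _ => ?_
  rw [addLeftEmbedding_apply, coeff_X_mul, coeff_pderiv, add_comm, multiFactorial_add_single]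
  push_cast
  ring

theorem fischerForm_map_conj_self_eq_zero_iff {f : MvPolynomial σ ℂ} :
    fischerForm σ ℂ f (map (starRingEnd ℂ) f) = 0 ↔ f = 0 := by
  refine ⟨fun h => ?_, by rintro rfl; simp⟩
  have hsum : ∑ α ∈ f.support, (multiFactorial α * Complex.normSq (coeff α f) : ℝ) = 0 := by
    rw [fischerForm_apply] at h
    simp only [coeff_map, mul_assoc, Complex.mul_conj] at h
    exact_mod_cast h
  rw [Finset.sum_eq_zero_iff_of_nonneg fun _ _ =>
    mul_nonneg (Nat.cast_nonneg _) (Complex.normSq_nonneg _)] at hsum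
  ext α
  by_contra hα
  have := hsum α (mem_support_iff.mpr hα)
  simp only [_root_.mul_eq_zero, cast_eq_zero, (multiFactorial_pos α).ne', map_eq_zero,
    false_or] at this
  exact hα (this.trans (coeff_zero α).symm)

section Complement

variable {W : Submodule ℂ (MvPolynomial σ ℂ)}

theorem inf_orthogonal_fischerForm_eq_bot (hW : ∀ f ∈ W, map (starRingEnd ℂ) f ∈ W) :
    W ⊓ (fischerForm σ ℂ).orthogonal W = ⊥ := by
  refine eq_bot_iff.mpr fun f ⟨hfW, hf⟩ => ?_
  have h := mem_orthogonal_iff.mp hf _ (hW f hfW)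
  rw [isSymm_fischerForm.eq] at h
  exact fischerForm_map_conj_self_eq_zero_iff.mp h

theorem sup_inf_orthogonal_fischerForm {V : Submodule ℂ (MvPolynomial σ ℂ)}
    [FiniteDimensional ℂ V] (hWV : W ≤ V) (hW : ∀ f ∈ W, map (starRingEnd ℂ) f ∈ W) :
    W ⊔ V ⊓ (fischerForm σ ℂ).orthogonal W = V := by
  set B := (fischerForm σ ℂ).restrict V
  set W' := W.comap V.subtype
  have horth : B.orthogonal W' = ((fischerForm σ ℂ).orthogonal W).comap V.subtype := by
    ext x
    simp only [mem_orthogonal_iff, Submodule.mem_comap, Submodule.subtype_apply]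
    exact ⟨fun h w hw => h ⟨w, hWV hw⟩ hw, fun h w hw => h w hw⟩
  have hcompl : IsCompl W' (B.orthogonal W') := by
    rw [isCompl_orthogonal_iff_disjoint (isSymm_fischerForm.restrict V).isRefl, disjoint_iff,
      horth, ← Submodule.comap_inf, inf_orthogonal_fischerForm_eq_bot hW, Submodule.comap_bot,
      Submodule.ker_subtype]
  have := congrArg (Submodule.map V.subtype) hcompl.sup_eq_top
  rwa [Submodule.map_sup, horth, Submodule.map_comap_subtype, Submodule.map_comap_subtype,
    Submodule.map_subtype_top, inf_eq_right.mpr hWV] at this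

end Complement

end MvPolynomial

open MvPolynomial LinearMap.BilinForm

section HarmonicSplitting

variable {m k ℓ : ℕ}

/-- The degree-`ℓ` part `∑_{i ≤ j} r²_ij · P_{ℓ-2}` of the ideal generated by the `r²_ij`. -/
noncomputable def rIdealDeg (m k ℓ : ℕ) : Submodule ℂ (Pscal m k) :=
  ⨆ p : {p : Fin k × Fin k // p.1 ≤ p.2},
    (PdegZ m k ((ℓ : ℤ) - 2)).map (LinearMap.mulLeft ℂ (rP m k p.1.1 p.1.2))

theorem pdegZ_sub_two_of_le (h : 2 ≤ ℓ) : PdegZ m k ((ℓ : ℤ) - 2) = Pdeg m k (ℓ - 2) := by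
  rw [PdegZ, if_pos (by omega)]
  congr
  omega

theorem pdegZ_sub_two_of_lt (h : ℓ < 2) : PdegZ m k ((ℓ : ℤ) - 2) = ⊥ := by
  rw [PdegZ, if_neg (by omega)]

theorem map_conj_mem_pdegZ {n : ℤ} {g : Pscal m k} (hg : g ∈ PdegZ m k n) :
    map (starRingEnd ℂ) g ∈ PdegZ m k n := by
  unfold PdegZ at hg ⊢
  split_ifs at hg ⊢
  · exact IsHomogeneous.map hg _
  · rw [(Submodule.mem_bot ℂ).mp hg, map_zero]
    exact zero_mem _

theorem rP_isHomogeneous (i j : Fin k) : (rP m k i j).IsHomogeneous 2 :=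
  IsHomogeneous.sum _ _ _ fun _ _ => (isHomogeneous_X _ _).mul (isHomogeneous_X _ _)

theorem rP_mul_mem_pdeg (i j : Fin k) {g : Pscal m k} (hg : g ∈ PdegZ m k ((ℓ : ℤ) - 2)) :
    rP m k i j * g ∈ Pdeg m k ℓ := by
  rcases le_or_gt 2 ℓ with h | h
  · rw [pdegZ_sub_two_of_le h] at hg
    have := (rP_isHomogeneous i j).mul hg
    rwa [Nat.add_sub_cancel' h] at this
  · rw [pdegZ_sub_two_of_lt h, Submodule.mem_bot] at hg
    rw [hg, mul_zero]
    exact zero_mem _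

theorem lap_mem_pdegZ (i j : Fin k) {f : Pscal m k} (hf : f ∈ Pdeg m k ℓ) :
    lap m k i j f ∈ PdegZ m k ((ℓ : ℤ) - 2) := by
  simp only [lap, LinearMap.sum_apply, LinearMap.comp_apply, Derivation.coeFn_coe]
  rcases le_or_gt 2 ℓ with h | h
  · rw [pdegZ_sub_two_of_le h]
    exact Submodule.sum_mem _ fun l _ => hf.pderiv.pderiv
  · rw [pdegZ_sub_two_of_lt h, Submodule.mem_bot]
    refine Finset.sum_eq_zero fun l _ => pderiv_eq_zero_of_isHomogeneous_zero ?_ _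
    simpa [show ℓ - 1 = 0 by omega] using hf.pderiv (i := (l, j))

theorem fischerForm_rP_mul (i j : Fin k) (p q : Pscal m k) :
    fischerForm _ ℂ (rP m k i j * p) q = fischerForm _ ℂ p (lap m k i j q) := by
  simp only [rP, lap, Finset.sum_mul, map_sum, LinearMap.sum_apply, LinearMap.comp_apply,
    Derivation.coeFn_coe]
  refine Finset.sum_congr rfl fun l _ => ?_
  rw [mul_comm (X _), mul_assoc, fischerForm_X_mul, fischerForm_X_mul]

theorem rIdealDeg_le_pdeg : rIdealDeg m k ℓ ≤ Pdeg m k ℓ :=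
  iSup_le fun _ => Submodule.map_le_iff_le_comap.mpr fun _ hg => rP_mul_mem_pdeg _ _ hg

theorem rP_mul_mem_rIdealDeg (p : {p : Fin k × Fin k // p.1 ≤ p.2}) {g : Pscal m k}
    (hg : g ∈ PdegZ m k ((ℓ : ℤ) - 2)) : rP m k p.1.1 p.1.2 * g ∈ rIdealDeg m k ℓ :=
  Submodule.mem_iSup_of_mem p (Submodule.mem_map_of_mem hg)

theorem map_conj_mem_rIdealDeg :
    ∀ f ∈ rIdealDeg m k ℓ, map (starRingEnd ℂ) f ∈ rIdealDeg m k ℓ := by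
  intro f hf
  refine Submodule.iSup_induction _ (motive := fun f => map (starRingEnd ℂ) f ∈ rIdealDeg m k ℓ)
    hf (fun p _ ⟨g, hg, hgf⟩ => ?_) (by simp) fun f g hf hg => by rw [map_add]; exact add_mem hf hg
  have : map (starRingEnd ℂ) (rP m k p.1.1 p.1.2) = rP m k p.1.1 p.1.2 := by simp [rP]
  rw [← hgf, LinearMap.mulLeft_apply, map_mul, this]
  exact rP_mul_mem_rIdealDeg p (map_conj_mem_pdegZ hg)

theorem mem_harm_iff {f : Pscal m k} :
    f ∈ Harm m k ↔ ∀ p : {p : Fin k × Fin k // p.1 ≤ p.2}, lap m k p.1.1 p.1.2 f = 0 := by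
  simp [Harm, Submodule.mem_iInf]

theorem harm_le_orthogonal_rIdealDeg :
    Harm m k ≤ (fischerForm _ ℂ).orthogonal (rIdealDeg m k ℓ) := by
  intro f hf
  rw [mem_orthogonal_iff]
  intro w hw
  refine Submodule.iSup_induction _ (motive := fun w => fischerForm _ ℂ w f = 0) hw
    (fun p _ ⟨g, _, hgw⟩ => ?_) (by simp) fun w w' hw hw' => by
      rw [map_add, LinearMap.add_apply, hw, hw', add_zero]
  rw [← hgw, LinearMap.mulLeft_apply, fischerForm_rP_mul, mem_harm_iff.mp hf p, map_zero]

/-- Testing `f` against `r²_ij · conj (Δ_ij f)` gives `⟪Δ_ij f, conj (Δ_ij f)⟫ = 0`. -/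
theorem pdeg_inf_orthogonal_rIdealDeg_le_harm :
    Pdeg m k ℓ ⊓ (fischerForm _ ℂ).orthogonal (rIdealDeg m k ℓ) ≤ Harm m k := by
  rintro f ⟨hfP, hf⟩
  refine mem_harm_iff.mpr fun p => ?_
  have hlap := lap_mem_pdegZ p.1.1 p.1.2 hfP
  have h := mem_orthogonal_iff.mp hf _ (rP_mul_mem_rIdealDeg p (map_conj_mem_pdegZ hlap))
  rw [fischerForm_rP_mul, isSymm_fischerForm.eq] at h
  exact fischerForm_map_conj_self_eq_zero_iff.mp h

theorem harm_inf_pdeg_eq :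
    Harm m k ⊓ Pdeg m k ℓ = Pdeg m k ℓ ⊓ (fischerForm _ ℂ).orthogonal (rIdealDeg m k ℓ) :=
  le_antisymm (fun _ ⟨hH, hP⟩ => ⟨hP, harm_le_orthogonal_rIdealDeg hH⟩)
    (fun _ hf => ⟨pdeg_inf_orthogonal_rIdealDeg_le_harm hf, hf.1⟩)

end HarmonicSplitting

theorem harmonic_splitting_general (m k : ℕ) (ℓ : ℕ) :
    (Harm m k ⊓ Pdeg m k ℓ) ⊔
        (⨆ p : {p : Fin k × Fin k // p.1 ≤ p.2},
          (PdegZ m k ((ℓ : ℤ) - 2)).map (LinearMap.mulLeft ℂ (rP m k p.1.1 p.1.2))) =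
      Pdeg m k ℓ ∧
    (Harm m k ⊓ Pdeg m k ℓ) ⊓
        (⨆ p : {p : Fin k × Fin k // p.1 ≤ p.2},
          (PdegZ m k ((ℓ : ℤ) - 2)).map (LinearMap.mulLeft ℂ (rP m k p.1.1 p.1.2))) = ⊥ := by
  change (Harm m k ⊓ Pdeg m k ℓ) ⊔ rIdealDeg m k ℓ = Pdeg m k ℓ ∧
    (Harm m k ⊓ Pdeg m k ℓ) ⊓ rIdealDeg m k ℓ = ⊥
  rw [harm_inf_pdeg_eq]
  constructor
  · rw [sup_comm]
    exact sup_inf_orthogonal_fischerForm rIdealDeg_le_pdeg map_conj_mem_rIdealDeg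
  · rw [inf_comm, ← inf_assoc, inf_right_comm,
      inf_orthogonal_fischerForm_eq_bot map_conj_mem_rIdealDeg, bot_inf_eq]

/-- Harmonic splitting in each degree (equation (4.3)):
P_ℓ = H_ℓ ⊕ Σ_{1≤i≤j≤k} r²_ij · P_{ℓ−2}. -/
theorem harmonic_splitting (m k : ℕ) (hm : 1 ≤ m) (hk : 1 ≤ k) (ℓ : ℕ) :
    (Harm m k ⊓ Pdeg m k ℓ) ⊔
        (⨆ p : {p : Fin k × Fin k // p.1 ≤ p.2},
          (PdegZ m k ((ℓ : ℤ) - 2)).map (LinearMap.mulLeft ℂ (rP m k p.1.1 p.1.2))) =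
      Pdeg m k ℓ ∧
    (Harm m k ⊓ Pdeg m k ℓ) ⊓
        (⨆ p : {p : Fin k × Fin k // p.1 ≤ p.2},
          (PdegZ m k ((ℓ : ℤ) - 2)).map (LinearMap.mulLeft ℂ (rP m k p.1.1 p.1.2))) = ⊥ :=
  harmonic_splitting_general m k ℓ
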